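/- arXiv:1705.08674 — 2 statements merged into one kernel-verified Lean document; each statement's English description precedes it below -/
import Mathlib

section
/- If G = Q_n(X) is a daisy cube, then its distance cube polynomial with respect to the vertex 0^n satisfies D_{G,0^n}(x,y) = C_G(x + y − 1), where C_G is the cube polynomial of G. -/
def Qcube (n : ℕ) : SimpleGraph (Fin n → Bool) where
  Adj u v := hammingDist u v = 1
  symm := ⟨fun u v h => by rwa [hammingDist_comm]⟩
  loopless := ⟨fun u h => by simp [hammingDist_self] at h⟩

def daisySet {n : ℕ} (X : Set (Fin n → Bool)) : Set (Fin n → Bool) :=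
  {u | ∃ x ∈ X, u ≤ x}

noncomputable def cubeCount {V : Type*} (G : SimpleGraph V) (k : ℕ) : ℕ :=
  Set.ncard {S : Set V | Nonempty (G.induce S ≃g Qcube k)}

noncomputable def distToSet {V : Type*} (G : SimpleGraph V) (u : V) (S : Set V) : ℕ :=
  sInf (G.dist u '' S)

noncomputable def distCubeCount {V : Type*} (G : SimpleGraph V) (u : V) (k d : ℕ) : ℕ :=
  Set.ncard {S : Set V | Nonempty (G.induce S ≃g Qcube k) ∧ distToSet G u S = d}

noncomputable def wCount {V : Type*} (G : SimpleGraph V) (u : V) (d : ℕ) : ℕ :=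
  Set.ncard {v : V | G.dist u v = d}

def interval {V : Type*} (G : SimpleGraph V) (u v : V) : Set V :=
  {w | G.dist u v = G.dist u w + G.dist w v}

/-!
Every induced `Q_k` of `Q_n` is a subcube, the set of words that agree with a fixed word outside a
`k`-set `D` of coordinates: an embedding of `Q_k` must move each of its directions along a single
coordinate of `Q_n`, because opposite edges of a square of `Q_n` flip the same coordinate.
A daisy cube is `Q_n` induced on a lower set `A`, so the subcubes of `Q_n(A)` are indexed by their
top vertex `m ∈ A` and a set `D` of free coordinates with `D ⊆ supp m`. Distances from `0ⁿ` in
`Q_n(A)` are weights, so such a subcube lies at distance `|m| - |D|`. Grouping by `m`, both sides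
become `∑_{m ∈ A} (x + y) ^ |m|` by the binomial theorem:
`∑_{D ⊆ supp m} x^|D| y^(|m|-|D|) = (x + y)^|m| = ∑_{D ⊆ supp m} (x + y - 1)^|D|`.
-/

open Finset Function
open scoped symmDiff

namespace SimpleGraph

noncomputable def induceInduceIso {V : Type*} (G : SimpleGraph V) (A : Set V) (S : Set A) :
    (G.induce A).induce S ≃g G.induce (Subtype.val '' S) where
  toEquiv := Equiv.Set.image Subtype.val S Subtype.val_injective
  map_rel_iff' := Iff.rfl

end SimpleGraph

namespace Finset

variable {α R : Type*} [CommSemiring R] {s : Finset α}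

lemma sum_card_filter_mul_pow {f : α → ℕ} {N : ℕ} (hf : ∀ a ∈ s, f a < N) (z : R) :
    ∑ k ∈ range N, (#{a ∈ s | f a = k} : R) * z ^ k = ∑ a ∈ s, z ^ f a := by
  rw [← sum_fiberwise_of_maps_to' (fun a ha => mem_range.2 (hf a ha))]
  simp [sum_const, nsmul_eq_mul]

lemma sum_card_filter_mul_pow_mul_pow {f g : α → ℕ} {N : ℕ} (hf : ∀ a ∈ s, f a < N)
    (hg : ∀ a ∈ s, g a < N) (x y : R) :
    ∑ k ∈ range N, ∑ d ∈ range N, (#{a ∈ s | f a = k ∧ g a = d} : R) * x ^ k * y ^ d =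
      ∑ a ∈ s, x ^ f a * y ^ g a := by
  rw [← sum_fiberwise_of_maps_to' (g := fun a => (f a, g a)) (t := range N ×ˢ range N)
    (fun a ha => mem_product.2 ⟨mem_range.2 (hf a ha), mem_range.2 (hg a ha)⟩)
    (fun kd => x ^ kd.1 * y ^ kd.2), sum_product]
  simp [sum_const, nsmul_eq_mul, mul_assoc]

end Finset

namespace Qcube

section Hamming

variable {ι : Type*} [Fintype ι]

def diffs (u v : ι → Bool) : Finset ι := {i | u i ≠ v i}

def supp (u : ι → Bool) : Finset ι := {i | u i = true}

@[simp] lemma mem_diffs {u v : ι → Bool} {i : ι} : i ∈ diffs u v ↔ u i ≠ v i := by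
  simp [diffs]

@[simp] lemma mem_supp {u : ι → Bool} {i : ι} : i ∈ supp u ↔ u i = true := by
  simp [supp]

lemma card_diffs (u v : ι → Bool) : #(diffs u v) = hammingDist u v := rfl

@[simp] lemma diffs_self (u : ι → Bool) : diffs u u = ∅ := by
  ext i; simp

lemma diffs_bot_left (u : ι → Bool) : diffs ⊥ u = supp u := by
  ext i; cases h : u i <;> simp [h]

lemma diffs_right_injective (u : ι → Bool) : Injective (diffs u) := by
  intro v w h
  funext i
  have := congrArg (i ∈ ·) h
  simp only [mem_diffs, eq_iff_iff] at this
  revert this; cases u i <;> cases v i <;> cases w i <;> simp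

variable [DecidableEq ι]

lemma diffs_symmDiff_diffs (u v w : ι → Bool) : diffs u v ∆ diffs v w = diffs u w := by
  ext i
  simp only [mem_symmDiff, mem_diffs]
  cases u i <;> cases v i <;> cases w i <;> simp

lemma eq_of_diffs_square {a b c d : ι → Bool} {i j l m : ι}
    (hab : diffs a b = {i}) (hbc : diffs b c = {j}) (had : diffs a d = {m})
    (hdc : diffs d c = {l}) (hac : a ≠ c) (hbd : b ≠ d) : j = m := by
  have h₁ : diffs a c = {i} ∆ {j} := by rw [← hab, ← hbc, diffs_symmDiff_diffs]
  have h₂ : diffs a c = {m} ∆ {l} := by rw [← had, ← hdc, diffs_symmDiff_diffs]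
  have hij : i ≠ j := by
    rintro rfl
    exact hac (diffs_right_injective a (by rw [diffs_self, h₁, symmDiff_self]; rfl)).symm
  have him : i ≠ m := by
    rintro rfl
    exact hbd (diffs_right_injective a (hab.trans had.symm))
  have key := Finset.ext_iff.1 (h₁.symm.trans h₂)
  have hil : i = l := by simpa [mem_symmDiff, hij, him] using key i
  simpa [mem_symmDiff, hij.symm, ← hil] using key j

variable {κ : Type*} [DecidableEq κ]

theorem exists_injective_diffs_eq_image {ψ : Finset κ → ι → Bool} (hψ : Injective ψ)
    (hadj : ∀ T a, a ∉ T → ∃ c, diffs (ψ T) (ψ (insert a T)) = {c}) :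
    ∃ δ : κ → ι, Injective δ ∧ ∀ T, diffs (ψ ∅) (ψ T) = T.image δ := by
  choose δ hδ using fun a => hadj ∅ a (notMem_empty a)
  -- The edge `T ⋖ insert a T` is carried to `insert b T ⋖ insert a (insert b T)` by a square.
  have hedge : ∀ T a, a ∉ T → diffs (ψ T) (ψ (insert a T)) = {δ a} := by
    intro T
    induction T using Finset.induction_on with
    | empty => exact fun a _ => hδ a
    | insert b T hb ih =>
      intro a ha
      rw [mem_insert, not_or] at ha
      obtain ⟨j, hj⟩ := hadj (insert b T) a (by simp [ha.1, ha.2])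
      obtain ⟨l, hl⟩ := hadj (insert a T) b (by simp [Ne.symm ha.1, hb])
      rw [insert_comm] at hl
      have hac : ψ T ≠ ψ (insert a (insert b T)) :=
        hψ.ne fun h => ha.2 (h ▸ mem_insert_self a _)
      have hbd : ψ (insert b T) ≠ ψ (insert a T) :=
        hψ.ne fun h => by
          have : a ∈ insert b T := h ▸ mem_insert_self a T
          simp [ha.1, ha.2] at this
      rw [hj, eq_of_diffs_square (ih b hb) hj (ih a ha.2) hl hac hbd]
  have hδ_inj : Injective δ := fun a b h => by
    have := hψ (diffs_right_injective _ ((hδ a).trans (h ▸ (hδ b).symm)))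
    simpa using this
  refine ⟨δ, hδ_inj, fun T => ?_⟩
  induction T using Finset.induction_on with
  | empty => simp
  | insert a T ha ih =>
    have hδa : δ a ∉ T.image δ := by simpa [hδ_inj.eq_iff] using ha
    rw [← diffs_symmDiff_diffs _ (ψ T), ih, hedge T a ha, image_insert,
      (disjoint_singleton_right.2 hδa).symmDiff_eq_sup, sup_eq_union, union_comm, insert_eq]

end Hamming

section Subcube

variable {ι κ : Type*} {m m' u : ι → Bool} {D D' : Finset ι} {e : κ → ι}

def subcube (m : ι → Bool) (D : Finset ι) : Set (ι → Bool) := {u | ∀ j ∉ D, u j = m j}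

lemma self_mem_subcube (m : ι → Bool) (D : Finset ι) : m ∈ subcube m D := fun _ _ => rfl

lemma range_extend_eq_subcube (he : Injective e) (hD : Set.range e = D) (m : ι → Bool) :
    Set.range (fun w => extend e w m) = subcube m D := by
  have hmem : ∀ j, (∃ i, e i = j) ↔ j ∈ D := fun j => by rw [← mem_coe, ← hD]; rfl
  ext u
  constructor
  · rintro ⟨w, rfl⟩ j hj
    exact extend_apply' _ _ _ ((hmem j).not.2 hj)
  · refine fun hu => ⟨u ∘ e, funext fun j => ?_⟩
    show extend e (u ∘ e) m j = u j
    by_cases hj : ∃ i, e i = j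
    · obtain ⟨i, rfl⟩ := hj
      exact he.extend_apply _ _ _
    · rw [extend_apply' _ _ _ hj, hu j ((hmem j).not.1 hj)]

variable [Fintype ι]

lemma mem_subcube_iff_diffs_subset : u ∈ subcube m D ↔ diffs m u ⊆ D := by
  show (∀ j ∉ D, u j = m j) ↔ ∀ j, j ∈ diffs m u → j ∈ D
  exact forall_congr' fun j => by rw [mem_diffs, not_imp_comm, ne_comm]

lemma le_of_mem_subcube (hD : D ⊆ supp m) (hu : u ∈ subcube m D) : u ≤ m := by
  intro j
  by_cases hj : j ∈ D
  · simp [mem_supp.1 (hD hj)]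
  · rw [hu j hj]

variable [Fintype κ]

lemma diffs_extend (he : Injective e) (w w' : κ → Bool) (m : ι → Bool) :
    diffs (extend e w m) (extend e w' m) = (diffs w w').map ⟨e, he⟩ := by
  ext j
  by_cases hj : ∃ i, e i = j
  · obtain ⟨i, rfl⟩ := hj
    simp [he.extend_apply]
  · simp only [mem_diffs, extend_apply' _ _ _ hj, ne_eq, not_true_eq_false, false_iff, mem_map]
    exact fun ⟨i, _, hi⟩ => hj ⟨i, hi⟩

lemma hammingDist_extend (he : Injective e) (w w' : κ → Bool) (m : ι → Bool) :
    hammingDist (extend e w m) (extend e w' m) = hammingDist w w' := by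
  rw [← card_diffs, diffs_extend he, card_map, card_diffs]

variable [DecidableEq ι]

lemma exists_subset_supp_and_subcube_eq (b : ι → Bool) (D : Finset ι) :
    ∃ m, D ⊆ supp m ∧ subcube b D = subcube m D :=
  ⟨fun j => decide (j ∈ D) || b j, fun j hj => by simp [hj], by ext u; simp +contextual [subcube]⟩

lemma subcube_injOn (hD : D ⊆ supp m) (hD' : D' ⊆ supp m') (h : subcube m D = subcube m' D') :
    m = m' ∧ D = D' := by
  obtain rfl : m = m' :=
    le_antisymm (le_of_mem_subcube hD' (h ▸ self_mem_subcube m D))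
      (le_of_mem_subcube hD (by rw [h]; exact self_mem_subcube m' D'))
  have key : ∀ {E E'}, E ⊆ supp m → subcube m E = subcube m E' → E ⊆ E' := by
    intro E E' hE hEE' j hj
    by_contra hj'
    have hmem : update m j false ∈ subcube m E := fun i hi =>
      update_of_ne (ne_of_mem_of_not_mem hj hi).symm _ _
    have := (hEE' ▸ hmem) j hj'
    simp [mem_supp.1 (hE hj)] at this
  exact ⟨rfl, (key hD h).antisymm (key hD' h.symm)⟩

end Subcube

variable {n k : ℕ}

noncomputable def extendEmbedding {e : Fin k → Fin n} (he : Injective e) (m : Fin n → Bool) :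
    Qcube k ↪g Qcube n where
  toFun w := extend e w m
  inj' := by
    intro w w' h
    funext i
    simpa [he.extend_apply] using congrFun h (e i)
  map_rel_iff' {w w'} := by
    change hammingDist (extend e w m) (extend e w' m) = 1 ↔ hammingDist w w' = 1
    rw [hammingDist_extend he]

theorem exists_range_eq_subcube (f : Qcube k ↪g Qcube n) :
    ∃ D : Finset (Fin n), #D = k ∧ Set.range f = subcube (f ⊥) D := by
  let ind : Finset (Fin k) → Fin k → Bool := fun T i => decide (i ∈ T)
  have ind_supp : ∀ w, ind (supp w) = w := fun w => funext fun i => by simp [ind]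
  have ind_empty : ind ∅ = ⊥ := rfl
  have ind_inj : Injective ind := fun T T' h => by ext i; simpa [ind] using congrFun h i
  have hadj : ∀ T a, a ∉ T → ∃ c, diffs (f (ind T)) (f (ind (insert a T))) = {c} := by
    intro T a ha
    have hT : diffs (ind T) (ind (insert a T)) = {a} := by
      ext i; by_cases hi : i = a <;> simp [ind, hi, ha]
    have := f.map_adj_iff.2 (show hammingDist (ind T) (ind (insert a T)) = 1 by
      rw [← card_diffs, hT, card_singleton])
    exact card_eq_one.1 this
  obtain ⟨δ, hδ, hdiffs⟩ :=
    exists_injective_diffs_eq_image (ψ := f ∘ ind) (f.injective.comp ind_inj) hadj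
  refine ⟨univ.image δ, by rw [card_image_of_injective _ hδ, card_fin], Set.ext fun v => ?_⟩
  rw [mem_subcube_iff_diffs_subset, ← ind_empty]
  constructor
  · rintro ⟨w, rfl⟩
    rw [← ind_supp w]
    exact (hdiffs (supp w)).trans_subset (image_subset_image (subset_univ _))
  · intro hv
    refine ⟨ind {i | δ i ∈ diffs (f (ind ∅)) v}, diffs_right_injective (f (ind ∅)) ?_⟩
    refine (hdiffs _).trans (Finset.ext fun j => ⟨?_, fun hj => ?_⟩)
    · intro hj
      obtain ⟨i, hi, rfl⟩ := mem_image.1 hj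
      simpa using hi
    · obtain ⟨i, -, rfl⟩ := mem_image.1 (hv hj)
      exact mem_image.2 ⟨i, by simpa using hj, rfl⟩

theorem nonempty_induce_iso_iff {S : Set (Fin n → Bool)} :
    Nonempty ((Qcube n).induce S ≃g Qcube k) ↔
      ∃ m D, D ⊆ supp m ∧ #D = k ∧ S = subcube m D := by
  constructor
  · rintro ⟨φ⟩
    let f : Qcube k ↪g Qcube n := (SimpleGraph.Embedding.induce S).comp φ.symm.toEmbedding
    have hf : Set.range f = S := by
      simp only [f, RelEmbedding.coe_trans, Set.range_comp, RelIso.coe_toRelEmbedding,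
        φ.symm.surjective.range_eq, Set.image_univ]
      exact Subtype.range_coe
    obtain ⟨D, hD, hrange⟩ := exists_range_eq_subcube f
    obtain ⟨m, hm, hsub⟩ := exists_subset_supp_and_subcube_eq (f ⊥) D
    exact ⟨m, D, hm, hD, hf.symm.trans (hrange.trans hsub)⟩
  · rintro ⟨m, D, -, rfl, rfl⟩
    let f := extendEmbedding (D.orderEmbOfFin rfl).injective m
    have hf : Set.range f = subcube m D :=
      range_extend_eq_subcube (D.orderEmbOfFin rfl).injective (D.range_orderEmbOfFin rfl) m
    rw [← hf]
    exact ⟨f.isoInduceRange.symm⟩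

lemma hammingDist_le_length {u v : Fin n → Bool} (W : (Qcube n).Walk u v) :
    hammingDist u v ≤ W.length := by
  induction W with
  | nil => simp
  | @cons u v w h _ ih =>
    calc hammingDist u w ≤ hammingDist u v + hammingDist v w := hammingDist_triangle _ _ _
      _ ≤ _ := by rw [SimpleGraph.Walk.length_cons, add_comm, (h : hammingDist u v = 1)]; omega

section LowerSet

variable {A : Set (Fin n → Bool)} {m : Fin n → Bool} {D : Finset (Fin n)}

open Classical in
/-- A subcube of `Q_n(A)` is coded by its top vertex and its set of free coordinates. -/
noncomputable def cubeCodes (A : Set (Fin n → Bool)) : Finset ((Fin n → Bool) × Finset (Fin n)) :=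
  {p | p.1 ∈ A ∧ p.2 ⊆ supp p.1}

def subcubeIn (A : Set (Fin n → Bool)) (p : (Fin n → Bool) × Finset (Fin n)) : Set A :=
  Subtype.val ⁻¹' subcube p.1 p.2

lemma mem_cubeCodes {p : (Fin n → Bool) × Finset (Fin n)} :
    p ∈ cubeCodes A ↔ p.1 ∈ A ∧ p.2 ⊆ supp p.1 := by
  simp [cubeCodes]

open Classical in
lemma sum_cubeCodes {R : Type*} [AddCommMonoid R] (F : (Fin n → Bool) → Finset (Fin n) → R) :
    ∑ p ∈ cubeCodes A, F p.1 p.2 = ∑ m with m ∈ A, ∑ D ∈ (supp m).powerset, F m D :=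
  sum_finset_product' _ _ _ fun p => by simp [mem_cubeCodes]

lemma subcube_subset (hA : IsLowerSet A) (hm : m ∈ A) (hD : D ⊆ supp m) : subcube m D ⊆ A :=
  fun _ hu => hA (le_of_mem_subcube hD hu) hm

lemma exists_walk_bot (hA : IsLowerSet A) (h0 : ⊥ ∈ A) : ∀ t (v : Fin n → Bool) (hv : v ∈ A),
    #(supp v) = t → ∃ W : ((Qcube n).induce A).Walk ⟨⊥, h0⟩ ⟨v, hv⟩, W.length = t
  | 0, v, hv, ht => by
    obtain rfl : v = ⊥ :=
      diffs_right_injective ⊥ (by rw [diffs_bot_left, card_eq_zero.1 ht, diffs_self])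
    exact ⟨.nil, rfl⟩
  | t + 1, v, hv, ht => by
    obtain ⟨i, hi⟩ := card_pos.1 (by omega : 0 < #(supp v))
    rw [mem_supp] at hi
    have hle : update v i false ≤ v := update_le_iff.2 ⟨Bool.false_le _, fun _ _ => le_rfl⟩
    have hsupp : supp (update v i false) = (supp v).erase i := by
      ext j; by_cases hj : j = i <;> simp [hj]
    obtain ⟨W, hW⟩ := exists_walk_bot hA h0 t _ (hA hle hv) (by
      rw [hsupp, card_erase_of_mem (mem_supp.2 hi), ht, Nat.add_sub_cancel])
    have hadj : ((Qcube n).induce A).Adj ⟨_, hA hle hv⟩ ⟨v, hv⟩ := by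
      show hammingDist _ _ = 1
      rw [← card_diffs, card_eq_one]
      exact ⟨i, by ext j; by_cases hj : j = i <;> simp [hj, hi]⟩
    exact ⟨W.concat hadj, by rw [SimpleGraph.Walk.length_concat, hW]⟩

theorem dist_bot_eq_card_supp (hA : IsLowerSet A) (h0 : ⊥ ∈ A) (v : A) :
    ((Qcube n).induce A).dist ⟨⊥, h0⟩ v = #(supp v.1) := by
  obtain ⟨W, hW⟩ := exists_walk_bot hA h0 _ v.1 v.2 rfl
  refine le_antisymm (hW ▸ SimpleGraph.dist_le W) ?_
  obtain ⟨P, hP⟩ := W.reachable.exists_walk_length_eq_dist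
  calc #(supp v.1) = hammingDist ⊥ v.1 := by rw [← card_diffs, diffs_bot_left]
    _ ≤ (P.map (SimpleGraph.Embedding.induce A).toHom).length := hammingDist_le_length _
    _ = _ := by rw [SimpleGraph.Walk.length_map, hP]

theorem distToSet_subcubeIn (hA : IsLowerSet A) (h0 : ⊥ ∈ A) {p : (Fin n → Bool) × Finset (Fin n)}
    (hp : p ∈ cubeCodes A) :
    distToSet ((Qcube n).induce A) ⟨⊥, h0⟩ (subcubeIn A p) = #(supp p.1) - #p.2 := by
  obtain ⟨m, D⟩ := p
  obtain ⟨hm, hD⟩ := mem_cubeCodes.1 hp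
  let b : Fin n → Bool := fun j => decide (j ∉ D) && m j
  have hb : b ∈ subcube m D := fun j hj => by simp [b, hj]
  have hsupp_b : supp b = supp m \ D := by ext j; simp [b, and_comm]
  have hle : ∀ u ∈ subcube m D, supp m \ D ⊆ supp u := fun u hu j hj => by
    rw [mem_sdiff] at hj
    rw [mem_supp, hu j hj.2]
    exact mem_supp.1 hj.1
  refine IsLeast.csInf_eq ⟨⟨⟨b, subcube_subset hA hm hD hb⟩, hb, ?_⟩, ?_⟩
  · rw [dist_bot_eq_card_supp hA h0, hsupp_b, card_sdiff_of_subset hD]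
  · rintro _ ⟨v, hv, rfl⟩
    rw [dist_bot_eq_card_supp hA h0, ← card_sdiff_of_subset hD]
    exact card_le_card (hle v hv)

lemma image_val_subcubeIn (hA : IsLowerSet A) {p : (Fin n → Bool) × Finset (Fin n)}
    (hp : p ∈ cubeCodes A) : Subtype.val '' subcubeIn A p = subcube p.1 p.2 := by
  rw [subcubeIn, Subtype.image_preimage_coe,
    Set.inter_eq_right.2 (subcube_subset hA (mem_cubeCodes.1 hp).1 (mem_cubeCodes.1 hp).2)]

theorem nonempty_induce_induce_iso_iff (hA : IsLowerSet A) (S : Set A) :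
    Nonempty (((Qcube n).induce A).induce S ≃g Qcube k) ↔
      ∃ p ∈ cubeCodes A, #p.2 = k ∧ S = subcubeIn A p := by
  let φ := SimpleGraph.induceInduceIso (Qcube n) A S
  rw [show Nonempty (((Qcube n).induce A).induce S ≃g Qcube k) ↔
      Nonempty ((Qcube n).induce (Subtype.val '' S) ≃g Qcube k) from
    ⟨fun ⟨e⟩ => ⟨φ.symm.trans e⟩, fun ⟨e⟩ => ⟨φ.trans e⟩⟩, nonempty_induce_iso_iff]
  constructor
  · rintro ⟨m, D, hD, hk, hS⟩
    obtain ⟨v, -, hv⟩ := hS.symm ▸ self_mem_subcube m D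
    refine ⟨(m, D), mem_cubeCodes.2 ⟨hv ▸ v.2, hD⟩, hk, ?_⟩
    rw [subcubeIn, ← hS, Set.preimage_image_eq _ Subtype.val_injective]
  · rintro ⟨p, hp, hk, rfl⟩
    exact ⟨p.1, p.2, (mem_cubeCodes.1 hp).2, hk, image_val_subcubeIn hA hp⟩

lemma injOn_subcubeIn (hA : IsLowerSet A) : Set.InjOn (subcubeIn A) (cubeCodes A) := by
  intro p hp q hq h
  have := congrArg (Subtype.val '' ·) h
  simp only [image_val_subcubeIn hA hp, image_val_subcubeIn hA hq] at this
  obtain ⟨h₁, h₂⟩ := subcube_injOn (mem_cubeCodes.1 hp).2 (mem_cubeCodes.1 hq).2 this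
  exact Prod.ext h₁ h₂

theorem ncard_setOf_nonempty_iso_and (hA : IsLowerSet A) (k : ℕ) (P : Set A → Prop)
    [DecidablePred P] :
    {S : Set A | Nonempty (((Qcube n).induce A).induce S ≃g Qcube k) ∧ P S}.ncard =
      #{p ∈ cubeCodes A | #p.2 = k ∧ P (subcubeIn A p)} := by
  have himage : {S : Set A | Nonempty (((Qcube n).induce A).induce S ≃g Qcube k) ∧ P S} =
      subcubeIn A '' ↑{p ∈ cubeCodes A | #p.2 = k ∧ P (subcubeIn A p)} := by
    ext S
    simp only [Set.mem_ofPred, nonempty_induce_induce_iso_iff hA, coe_filter, Set.mem_image]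
    constructor
    · rintro ⟨⟨p, hp, hk, rfl⟩, hP⟩
      exact ⟨p, ⟨hp, hk, hP⟩, rfl⟩
    · rintro ⟨p, ⟨hp, hk, hP⟩, rfl⟩
      exact ⟨⟨p, hp, hk, rfl⟩, hP⟩
  rw [himage, ((injOn_subcubeIn hA).mono ?_).ncard_image, Set.ncard_coe_finset]
  exact coe_subset.2 (filter_subset _ _)

lemma cubeCount_eq (hA : IsLowerSet A) (k : ℕ) :
    cubeCount ((Qcube n).induce A) k = #{p ∈ cubeCodes A | #p.2 = k} := by
  have := ncard_setOf_nonempty_iso_and hA k fun _ => True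
  simp only [and_true] at this
  exact this

lemma distCubeCount_eq (hA : IsLowerSet A) (h0 : ⊥ ∈ A) (k d : ℕ) :
    distCubeCount ((Qcube n).induce A) ⟨⊥, h0⟩ k d =
      #{p ∈ cubeCodes A | #p.2 = k ∧ #(supp p.1) - #p.2 = d} := by
  rw [distCubeCount, ncard_setOf_nonempty_iso_and hA k]
  exact congrArg card (filter_congr fun p hp => by rw [distToSet_subcubeIn hA h0 hp])

end LowerSet

end Qcube

open Qcube in
theorem distCubePolynomial_of_daisy_cube_eq_cubePolynomial (n : ℕ)
    (X : Set (Fin n → Bool)) (h0 : (fun _ => false) ∈ daisySet X) (x y : ℝ) :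
    ∑ k ∈ Finset.range (2 ^ n + 1), ∑ d ∈ Finset.range (2 ^ n + 1),
      (distCubeCount ((Qcube n).induce (daisySet X)) ⟨fun _ => false, h0⟩ k d : ℝ)
        * x ^ k * y ^ d =
    ∑ k ∈ Finset.range (2 ^ n + 1),
      (cubeCount ((Qcube n).induce (daisySet X)) k : ℝ) * (x + y - 1) ^ k := by
  have hA : IsLowerSet (daisySet X) := (lowerClosure X).lower
  have hbound : ∀ s : Finset (Fin n), #s < 2 ^ n + 1 := fun s => by
    have := card_le_univ s
    have := n.lt_two_pow_self
    simp only [Fintype.card_fin] at *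
    omega
  have hdist : ∀ k d, distCubeCount ((Qcube n).induce (daisySet X)) ⟨fun _ => false, h0⟩ k d =
      #{p ∈ cubeCodes (daisySet X) | #p.2 = k ∧ #(supp p.1) - #p.2 = d} :=
    distCubeCount_eq hA h0
  simp only [hdist, cubeCount_eq hA]
  rw [sum_card_filter_mul_pow_mul_pow (fun p _ => hbound p.2)
      (fun p _ => (Nat.sub_le _ _).trans_lt (hbound _)),
    sum_card_filter_mul_pow (fun p _ => hbound p.2),
    sum_cubeCodes fun m D => x ^ #D * y ^ (#(supp m) - #D),
    sum_cubeCodes fun _ D => (x + y - 1) ^ #D]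
  refine sum_congr rfl fun m _ => ?_
  have := sum_pow_mul_eq_add_pow (x + y - 1) 1 (supp m)
  simp only [one_pow, mul_one, sub_add_cancel] at this
  rw [sum_pow_mul_eq_add_pow, this]
end

section
/- For every n ≥ 2, the cube polynomial of the Lucas cube Λ_n satisfies C_{Λ_n}(x) = Σ_{k=0}^{⌊n/2⌋} [2·binom(n−k, k) − binom(n−k−1, k)] (1 + x)^k. -/
def fibSet (n : ℕ) : Set (Fin n → Bool) :=
  {u | ∀ i j : Fin n, (j : ℕ) = (i : ℕ) + 1 → ¬(u i = true ∧ u j = true)}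

lemma zero_mem_fibSet (n : ℕ) : (fun _ => false) ∈ fibSet n := by
  intro i j _ h
  simp at h

def lucasSet (n : ℕ) : Set (Fin n → Bool) :=
  {u | u ∈ fibSet n ∧ ∀ i j : Fin n, (i : ℕ) = 0 → (j : ℕ) = n - 1 → ¬(u i = true ∧ u j = true)}

lemma zero_mem_lucasSet (n : ℕ) : (fun _ => false) ∈ lucasSet n := by
  refine ⟨zero_mem_fibSet n, ?_⟩
  intro i j _ _ h
  simp at h

/-!
An induced `k`-cube of `Q_n` is a subcube: it fixes all coordinates outside a set `K` of `k`
coordinates. Indeed, an injective cube homomorphism `Q_k → Q_n` sends the `k` neighbours of a base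
point to flips of `k` distinct coordinates, and by induction (two vertices at distance two have
exactly two common neighbours) every vertex to the corresponding flip of the base point. The Lucas
cube is down-closed, so a subcube lies in it iff its top vertex `u` does, and the `k`-cubes with top
vertex `u` correspond to the `k`-subsets of the support of `u`. Hence
`C_{Λ_n}(x) = ∑_{u ∈ Λ_n} (1 + x)^{|u|}`, and it remains to count Lucas words of weight `k`, i.e.
`k`-subsets of positions without cyclically consecutive elements: splitting on the last position
gives `binom(n-k, k) + binom(n-k-1, k-1) = 2 binom(n-k, k) - binom(n-k-1, k)`.
-/

open Finset Function
open scoped symmDiff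

section CubeOnFinsets

variable {α β : Type*} [DecidableEq α] [DecidableEq β]

lemma symmDiff_erase_self {s : Finset α} {j : α} (hj : j ∈ s) : s ∆ s.erase j = {j} := by
  ext i; by_cases hi : i = j <;> simp [mem_symmDiff, hi, hj]

lemma eq_or_eq_insert_insert_of_card_symmDiff {A W : Finset α} {x y : α} (hxy : x ≠ y)
    (hx : x ∉ A) (hy : y ∉ A) (hWx : #(W ∆ insert x A) = 1) (hWy : #(W ∆ insert y A) = 1) :
    W = A ∨ W = insert x (insert y A) := by
  obtain ⟨p, hp⟩ := card_eq_one.1 hWx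
  obtain ⟨q, hq⟩ := card_eq_one.1 hWy
  have hp' := fun z => congrArg (z ∈ ·) hp
  have hq' := fun z => congrArg (z ∈ ·) hq
  simp only [mem_symmDiff, mem_insert, mem_singleton, eq_iff_iff] at hp' hq'
  by_cases hpx : p = x
  · left; ext z; grind
  · right; ext z; grind

theorem exists_embedding_of_cube_hom (G : Finset β → Finset α) (hG : Injective G)
    (h_empty : G ∅ = ∅) (hadj : ∀ s t, #(s ∆ t) = 1 → #(G s ∆ G t) = 1) :
    ∃ c : β ↪ α, ∀ s, G s = s.map c := by
  have h_single : ∀ j, ∃ i, G {j} = {i} := fun j => by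
    have h := hadj {j} ∅ (by simp [← bot_eq_empty])
    rw [h_empty, ← bot_eq_empty, symmDiff_bot] at h
    exact card_eq_one.1 h
  choose c hc using h_single
  have c_inj : Injective c := fun j j' h => singleton_injective (hG (by rw [hc, hc, h]))
  set c' : β ↪ α := ⟨c, c_inj⟩
  refine ⟨c', fun s => ?_⟩
  induction s using Finset.strongInduction with
  | H s ih =>
  rcases le_or_gt #s 1 with hs | hs
  · rcases Nat.le_one_iff_eq_zero_or_eq_one.1 hs with hs | hs
    · simp [card_eq_zero.1 hs, h_empty]
    · obtain ⟨j, rfl⟩ := card_eq_one.1 hs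
      simp [c', hc]
  -- `G s` is a common neighbour of `G (s.erase j)` and `G (s.erase j')` other than `G A`
  obtain ⟨j, hj, j', hj', hjj'⟩ := one_lt_card.1 hs
  set A := (s.erase j).erase j'
  have hA : A ⊂ s := (erase_subset _ _).trans_ssubset (erase_ssubset hj)
  have hjA : j ∉ A := fun h => notMem_erase j s (mem_of_mem_erase h)
  have hj'A : j' ∉ A := notMem_erase j' _
  have hs_eq : s = insert j (insert j' A) := by
    rw [insert_erase (mem_erase.2 ⟨hjj'.symm, hj'⟩), insert_erase hj]
  have hs_erase : s.erase j = insert j' A := by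
    rw [hs_eq, erase_insert (by simp [hjj', hjA])]
  have hs_erase' : s.erase j' = insert j A := by
    rw [hs_eq, insert_comm, erase_insert (by simp [hjj'.symm, hj'A])]
  have h₁ := hadj s (s.erase j) (by rw [symmDiff_erase_self hj, card_singleton])
  have h₂ := hadj s (s.erase j') (by rw [symmDiff_erase_self hj', card_singleton])
  rw [ih _ (erase_ssubset hj), hs_erase, map_insert] at h₁
  rw [ih _ (erase_ssubset hj'), hs_erase', map_insert] at h₂
  rcases eq_or_eq_insert_insert_of_card_symmDiff (c_inj.ne hjj'.symm)
    (by simpa [c'] using hj'A) (by simpa [c'] using hjA) h₁ h₂ with h | h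
  · exact absurd (hG (h.trans (ih A hA).symm) ▸ hj) hjA
  · rw [h, hs_eq, map_insert, map_insert, insert_comm]
    rfl

end CubeOnFinsets

section BoolFunctions

variable {α β : Type*}

def subcube (u : α → Bool) (K : Finset α) : Set (α → Bool) := {v | ∀ i ∉ K, v i = u i}

lemma mem_subcube_self (u : α → Bool) (K : Finset α) : u ∈ subcube u K := fun _ _ => rfl

def flipOn [DecidableEq α] (u : α → Bool) (S : Finset α) : α → Bool :=
  fun i => if i ∈ S then !u i else u i

@[simp] lemma flipOn_empty [DecidableEq α] (u : α → Bool) : flipOn u ∅ = u :=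
  funext fun i => by simp [flipOn]

def extendOn [DecidableEq α] (u : α → Bool) {K : Finset α} (e : β ≃ K) (ε : β → Bool) :
    α → Bool :=
  fun i => if h : i ∈ K then ε (e.symm ⟨i, h⟩) else u i

lemma range_extendOn [DecidableEq α] (u : α → Bool) {K : Finset α} (e : β ≃ K) :
    Set.range (extendOn u e) = subcube u K := by
  ext v
  constructor
  · rintro ⟨ε, rfl⟩ i hi
    simp [extendOn, hi]
  · intro hv
    refine ⟨fun j => v (e j), funext fun i => ?_⟩
    by_cases hi : i ∈ K <;> simp [extendOn, hi, hv i]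

variable [Fintype α]

def diffSet (u v : α → Bool) : Finset α := univ.filter fun i => u i ≠ v i

@[simp] lemma mem_diffSet {u v : α → Bool} {i : α} : i ∈ diffSet u v ↔ u i ≠ v i := by
  simp [diffSet]

lemma hammingDist_eq_card_diffSet (u v : α → Bool) : hammingDist u v = #(diffSet u v) := rfl

lemma mem_subcube_iff_diffSet_subset {u v : α → Bool} {K : Finset α} :
    v ∈ subcube u K ↔ diffSet u v ⊆ K := by
  simp only [subcube, Set.mem_ofPred_eq, subset_iff, mem_diffSet]
  exact forall_congr' fun i => by rw [not_imp_comm, eq_comm]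

def ones (u : α → Bool) : Finset α := univ.filter fun i => u i = true

@[simp] lemma mem_ones {u : α → Bool} {i : α} : i ∈ ones u ↔ u i = true := by simp [ones]

lemma subcube_subset_Iic {u : α → Bool} {K : Finset α} (hK : K ⊆ ones u) :
    subcube u K ⊆ Set.Iic u := fun v hv i => by
  by_cases hi : i ∈ K
  · simp [mem_ones.1 (hK hi)]
  · exact (hv i hi).le

lemma subcube_subset_iff_of_isLowerSet {X : Set (α → Bool)} (hX : IsLowerSet X) {u : α → Bool}
    {K : Finset α} (hK : K ⊆ ones u) : subcube u K ⊆ X ↔ u ∈ X :=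
  ⟨fun h => h (mem_subcube_self u K), fun hu _ hv => hX (subcube_subset_Iic hK hv) hu⟩

variable [DecidableEq α]

@[simp] lemma flipOn_diffSet (u v : α → Bool) : flipOn u (diffSet u v) = v := by
  funext i; cases hu : u i <;> cases hv : v i <;> simp [flipOn, hu, hv]

@[simp] lemma diffSet_flipOn_flipOn (u : α → Bool) (S T : Finset α) :
    diffSet (flipOn u S) (flipOn u T) = S ∆ T := by
  ext i
  by_cases hS : i ∈ S <;> by_cases hT : i ∈ T <;> simp [flipOn, mem_symmDiff, hS, hT]

@[simp] lemma diffSet_flipOn (u : α → Bool) (S : Finset α) : diffSet u (flipOn u S) = S := by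
  have h := diffSet_flipOn_flipOn u ∅ S
  rwa [flipOn_empty, ← bot_eq_empty, bot_symmDiff] at h

lemma hammingDist_flipOn_flipOn (u : α → Bool) (S T : Finset α) :
    hammingDist (flipOn u S) (flipOn u T) = #(S ∆ T) := by
  rw [hammingDist_eq_card_diffSet, diffSet_flipOn_flipOn]

lemma flipOn_injective (u : α → Bool) : Injective (flipOn u) := fun S T h => by
  rw [← diffSet_flipOn u S, h, diffSet_flipOn]

lemma flipOn_singleton_mem_subcube {u : α → Bool} {K : Finset α} {i : α} :
    flipOn u {i} ∈ subcube u K ↔ i ∈ K := by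
  rw [mem_subcube_iff_diffSet_subset, diffSet_flipOn, singleton_subset_iff]

lemma subcube_inj {u u' : α → Bool} {K K' : Finset α} (hK : K ⊆ ones u) (hK' : K' ⊆ ones u')
    (h : subcube u K = subcube u' K') : u = u' ∧ K = K' := by
  obtain rfl : u = u' := le_antisymm (subcube_subset_Iic hK' (h ▸ mem_subcube_self u K))
    (subcube_subset_Iic hK (h ▸ mem_subcube_self u' K'))
  exact ⟨rfl, ext fun i => by rw [← flipOn_singleton_mem_subcube, h, flipOn_singleton_mem_subcube]⟩

variable [Fintype β]

theorem exists_range_eq_subcube [DecidableEq β] {g : (β → Bool) → α → Bool} (hg : Injective g)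
    (hadj : ∀ ε δ, hammingDist ε δ = 1 → hammingDist (g ε) (g δ) = 1) :
    ∃ b K, #K = Fintype.card β ∧ Set.range g = subcube b K := by
  -- read both cubes as finsets of flipped coordinates, based at `0` and at `b = g 0`
  set b := g fun _ => false
  set G : Finset β → Finset α := fun s => diffSet b (g (flipOn (fun _ => false) s))
  have hgG : ∀ s, g (flipOn (fun _ => false) s) = flipOn b (G s) := fun s =>
    (flipOn_diffSet _ _).symm
  obtain ⟨c, hc⟩ := exists_embedding_of_cube_hom G
    (fun s t h => flipOn_injective _ (hg (by rw [hgG, hgG, h])))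
    (by simp [G, b, diffSet])
    (fun s t h => by
      rw [← hammingDist_flipOn_flipOn b, ← hgG, ← hgG]
      exact hadj _ _ (by rwa [hammingDist_flipOn_flipOn]))
  refine ⟨b, univ.map c, by simp, Set.ext fun v => ⟨?_, fun hv => ?_⟩⟩
  · rintro ⟨ε, rfl⟩
    rw [← flipOn_diffSet (fun _ => false) ε, hgG, hc, mem_subcube_iff_diffSet_subset,
      diffSet_flipOn]
    exact map_subset_map.2 (subset_univ _)
  · obtain ⟨s, -, hs⟩ := subset_map_iff.1 (mem_subcube_iff_diffSet_subset.1 hv)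
    exact ⟨flipOn (fun _ => false) s, by rw [hgG, hc, ← hs, flipOn_diffSet]⟩

lemma diffSet_extendOn (u : α → Bool) {K : Finset α} (e : β ≃ K) (ε δ : β → Bool) :
    diffSet (extendOn u e ε) (extendOn u e δ) =
      (diffSet ε δ).map (e.toEmbedding.trans (.subtype (· ∈ K))) := by
  ext i
  by_cases hi : i ∈ K
  · obtain ⟨j, rfl⟩ : ∃ j, (e j : α) = i := ⟨e.symm ⟨i, hi⟩, by simp⟩
    simp [extendOn]
  · have : ∀ j, (e j : α) ≠ i := fun j h => hi (h ▸ (e j).2)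
    simp [extendOn, hi, this]

lemma hammingDist_extendOn (u : α → Bool) {K : Finset α} (e : β ≃ K) (ε δ : β → Bool) :
    hammingDist (extendOn u e ε) (extendOn u e δ) = hammingDist ε δ := by
  rw [hammingDist_eq_card_diffSet, diffSet_extendOn, card_map, hammingDist_eq_card_diffSet]

end BoolFunctions

noncomputable def induceInduceIso {V : Type*} (G : SimpleGraph V) (X : Set V) (S : Set X) :
    (G.induce X).induce S ≃g G.induce (Subtype.val '' S) where
  toEquiv := Equiv.Set.image _ S Subtype.val_injective
  map_rel_iff' := Iff.rfl

lemma ncard_iso_induce_induce {V W : Type*} (G : SimpleGraph V) (X : Set V) (H : SimpleGraph W) :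
    {S : Set X | Nonempty ((G.induce X).induce S ≃g H)}.ncard =
      {T : Set V | T ⊆ X ∧ Nonempty (G.induce T ≃g H)}.ncard := by
  have : {T : Set V | T ⊆ X ∧ Nonempty (G.induce T ≃g H)} =
      Set.image Subtype.val '' {S : Set X | Nonempty ((G.induce X).induce S ≃g H)} := by
    ext T
    constructor
    · rintro ⟨hTX, ⟨e⟩⟩
      have hT : Subtype.val '' (Subtype.val ⁻¹' T : Set X) = T := by simpa using hTX
      refine ⟨Subtype.val ⁻¹' T, ⟨(induceInduceIso G X _).trans ?_⟩, hT⟩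
      rw [hT]
      exact e
    · rintro ⟨S, ⟨e⟩, rfl⟩
      exact ⟨Subtype.coe_image_subset X S, ⟨(induceInduceIso G X S).symm.trans e⟩⟩
  rw [this, Set.ncard_image_of_injective _ (Set.image_injective.2 Subtype.val_injective)]

section InducedCubes

variable {n k : ℕ}

def extendOnEmbedding (u : Fin n → Bool) {K : Finset (Fin n)} (e : Fin k ≃ K) :
    Qcube k ↪g Qcube n where
  toFun := extendOn u e
  inj' ε δ h := hammingDist_eq_zero.1 (by rw [← hammingDist_extendOn u e, h, hammingDist_self])
  map_rel_iff' {ε δ} := by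
    change hammingDist (extendOn u e ε) (extendOn u e δ) = 1 ↔ _
    rw [hammingDist_extendOn]
    rfl

lemma nonempty_iso_subcube (u : Fin n → Bool) (K : Finset (Fin n)) :
    Nonempty ((Qcube n).induce (subcube u K) ≃g Qcube #K) := by
  rw [← range_extendOn u K.equivFin.symm]
  exact ⟨(extendOnEmbedding u K.equivFin.symm).isoInduceRange.symm⟩

theorem nonempty_iso_Qcube_iff {T : Set (Fin n → Bool)} :
    Nonempty ((Qcube n).induce T ≃g Qcube k) ↔
      ∃ u K, K ⊆ ones u ∧ #K = k ∧ T = subcube u K := by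
  refine ⟨fun ⟨e⟩ => ?_, fun ⟨u, K, _, hk, hT⟩ => hk ▸ hT ▸ nonempty_iso_subcube u K⟩
  obtain ⟨b, K, hK, hT⟩ := exists_range_eq_subcube (g := fun ε => (e.symm ε : Fin n → Bool))
    (Subtype.val_injective.comp e.symm.injective) (fun ε δ h => e.symm.map_adj_iff.2 h)
  rw [show (fun ε => (e.symm ε : Fin n → Bool)) = Subtype.val ∘ e.symm from rfl,
    e.symm.surjective.range_comp, Subtype.range_coe] at hT
  -- raise the free coordinates of the base point to `true`
  refine ⟨fun i => b i || decide (i ∈ K), K, fun i hi => by simp [hi], by simpa using hK, ?_⟩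
  rw [hT]
  exact Set.ext fun v => forall₂_congr fun i hi => by simp [hi]

theorem cubeCount_induce_of_isLowerSet {X : Set (Fin n → Bool)} [DecidablePred (· ∈ X)]
    (hX : IsLowerSet X) :
    cubeCount ((Qcube n).induce X) k = ∑ u ∈ X.toFinset, (#(ones u)).choose k := by
  have hcubes : {T | T ⊆ X ∧ Nonempty ((Qcube n).induce T ≃g Qcube k)} =
      (fun p : (_ : Fin n → Bool) × Finset (Fin n) => subcube p.1 p.2) ''
        ↑(X.toFinset.sigma fun u => (ones u).powersetCard k) := by
    ext T
    simp only [Set.mem_ofPred_eq, nonempty_iso_Qcube_iff, Set.mem_image, mem_coe, mem_sigma,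
      Set.mem_toFinset, mem_powersetCard, Sigma.exists]
    constructor
    · rintro ⟨hTX, u, K, hK, hk, rfl⟩
      exact ⟨u, K, ⟨(subcube_subset_iff_of_isLowerSet hX hK).1 hTX, hK, hk⟩, rfl⟩
    · rintro ⟨u, K, ⟨hu, hK, hk⟩, rfl⟩
      exact ⟨(subcube_subset_iff_of_isLowerSet hX hK).2 hu, u, K, hK, hk, rfl⟩
  rw [cubeCount, ncard_iso_induce_induce, hcubes, Set.InjOn.ncard_image, Set.ncard_coe_finset,
    card_sigma]
  · simp [card_powersetCard]
  · rintro ⟨u, K⟩ hp ⟨u', K'⟩ hp' h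
    simp only [mem_coe, mem_sigma, mem_powersetCard] at hp hp'
    obtain ⟨rfl, rfl⟩ := subcube_inj hp.2.1 hp'.2.1 h
    rfl

end InducedCubes

def NoConsec (s : Finset ℕ) : Prop := ∀ i ∈ s, i + 1 ∉ s

instance : DecidablePred NoConsec := fun s => inferInstanceAs (Decidable (∀ i ∈ s, i + 1 ∉ s))

def noConsecSubsets (I : Finset ℕ) (j : ℕ) : Finset (Finset ℕ) := (I.powersetCard j).filter NoConsec

lemma mem_noConsecSubsets {I s : Finset ℕ} {j : ℕ} :
    s ∈ noConsecSubsets I j ↔ (∀ x ∈ s, x ∈ I) ∧ #s = j ∧ NoConsec s := by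
  simp [noConsecSubsets, subset_iff, and_assoc]

lemma noConsecSubsets_zero (I : Finset ℕ) : noConsecSubsets I 0 = {∅} := by
  ext s
  simp only [mem_noConsecSubsets, mem_singleton, card_eq_zero]
  exact ⟨fun h => h.2.1, by rintro rfl; simp [NoConsec]⟩

lemma filter_notMem_noConsecSubsets_Ico (a b j : ℕ) :
    (noConsecSubsets (Ico a (b + 1)) j).filter (b ∉ ·) = noConsecSubsets (Ico a b) j := by
  ext s
  simp only [mem_filter, mem_noConsecSubsets, mem_Ico]
  constructor
  · rintro ⟨⟨hs, hj, hnc⟩, hb⟩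
    refine ⟨fun x hx => ?_, hj, hnc⟩
    have := hs x hx
    have : x ≠ b := by rintro rfl; exact hb hx
    omega
  · rintro ⟨hs, hj, hnc⟩
    exact ⟨⟨fun x hx => by have := hs x hx; omega, hj, hnc⟩, fun h => by have := hs b h; omega⟩

lemma card_filter_mem_noConsecSubsets_Ico {a b : ℕ} (hab : a ≤ b) (j : ℕ) :
    #((noConsecSubsets (Ico a (b + 1)) (j + 1)).filter (b ∈ ·)) =
      #(noConsecSubsets (Ico a (b - 1)) j) := by
  refine card_nbij' (fun s => s.erase b) (insert b) (fun s hs => ?_) (fun s hs => ?_)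
    (fun s hs => insert_erase (mem_filter.1 hs).2) (fun s hs => erase_insert fun h => ?_)
  · simp only [coe_filter, Set.mem_ofPred_eq, mem_noConsecSubsets, mem_Ico, mem_coe] at hs ⊢
    obtain ⟨⟨hs, hj, hnc⟩, hb⟩ := hs
    refine ⟨fun x hx => ?_, by rw [card_erase_of_mem hb, hj]; rfl,
      fun x hx hx1 => hnc x (mem_of_mem_erase hx) (mem_of_mem_erase hx1)⟩
    have := hs x (mem_of_mem_erase hx)
    have : x ≠ b := ne_of_mem_erase hx
    have : x + 1 ≠ b := fun h => hnc x (mem_of_mem_erase hx) (h ▸ hb)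
    omega
  · simp only [coe_filter, Set.mem_ofPred_eq, mem_noConsecSubsets, mem_Ico, mem_coe] at hs ⊢
    obtain ⟨hs, hj, hnc⟩ := hs
    have hb : b ∉ s := fun h => by have := hs b h; omega
    refine ⟨⟨fun x hx => ?_, by rw [card_insert_of_notMem hb, hj], fun x hx hx1 => ?_⟩,
      mem_insert_self _ _⟩
    · rcases mem_insert.1 hx with rfl | hx
      · omega
      · have := hs x hx; omega
    · rcases mem_insert.1 hx with rfl | hx <;> rcases mem_insert.1 hx1 with h | h
      · omega
      · have := hs _ h; omega
      · have := hs x hx; omega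
      · exact hnc x hx h
  · have := mem_Ico.1 ((mem_noConsecSubsets.1 (mem_coe.1 hs)).1 b h)
    omega

lemma card_noConsecSubsets_Ico_add (a m j : ℕ) :
    #(noConsecSubsets (Ico a (a + m)) j) = (m + 1 - j).choose j := by
  induction m using Nat.strong_induction_on generalizing j with
  | _ m ih =>
  match m, j with
  | _, 0 => simp [noConsecSubsets_zero]
  | 0, j + 1 => simp [noConsecSubsets]
  | 1, 0 + 1 => simp [noConsecSubsets, NoConsec, powersetCard_one, filter_singleton]
  | 1, j + 2 => simp [noConsecSubsets]
  | m + 2, j + 1 =>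
    rw [show a + (m + 2) = a + (m + 1) + 1 by omega,
      ← card_filter_add_card_filter_not (p := (a + (m + 1) ∈ ·)),
      card_filter_mem_noConsecSubsets_Ico (by omega), filter_notMem_noConsecSubsets_Ico,
      show a + (m + 1) - 1 = a + m by omega, ih m (by omega), ih (m + 1) (by omega)]
    rcases le_or_gt j (m + 1) with hj | hj
    · rw [show m + 2 + 1 - (j + 1) = m + 1 - j + 1 by omega, Nat.choose_succ_succ']
      congr 2
      omega
    · rw [show m + 1 - j = 0 by omega, show m + 2 + 1 - (j + 1) = 0 by omega,
        Nat.choose_eq_zero_of_lt (by omega : 0 < j), zero_add,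
        show m + 1 + 1 - (j + 1) = 0 by omega]

lemma card_noConsecSubsets_Ico (a b j : ℕ) :
    #(noConsecSubsets (Ico a b) j) = (b - a + 1 - j).choose j := by
  rcases le_total a b with h | h
  · obtain ⟨m, rfl⟩ := Nat.exists_eq_add_of_le h
    simpa using card_noConsecSubsets_Ico_add a m j
  · rw [Ico_eq_empty_of_le h, Nat.sub_eq_zero_of_le h, ← Ico_self a]
    simpa using card_noConsecSubsets_Ico_add a 0 j

def lucasSubsets (n j : ℕ) : Finset (Finset ℕ) :=
  (noConsecSubsets (range n) j).filter fun s => ¬(0 ∈ s ∧ n - 1 ∈ s)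

lemma mem_lucasSubsets {n j : ℕ} {s : Finset ℕ} :
    s ∈ lucasSubsets n j ↔ (∀ x ∈ s, x < n) ∧ #s = j ∧ NoConsec s ∧ ¬(0 ∈ s ∧ n - 1 ∈ s) := by
  simp [lucasSubsets, mem_noConsecSubsets, and_assoc]

lemma card_lucasSubsets_succ_eq_card_add_card {n : ℕ} (hn : 2 ≤ n) (j : ℕ) :
    #(lucasSubsets n (j + 1)) =
      #(noConsecSubsets (Ico 0 (n - 1)) (j + 1)) + #(noConsecSubsets (Ico 1 (n - 2)) j) := by
  have h_mem : (lucasSubsets n (j + 1)).filter (n - 1 ∈ ·) =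
      (noConsecSubsets (Ico 1 (n - 1 + 1)) (j + 1)).filter (n - 1 ∈ ·) := by
    ext s
    simp only [lucasSubsets, mem_filter, mem_noConsecSubsets, mem_range, mem_Ico]
    constructor
    · rintro ⟨⟨⟨hs, hj, hnc⟩, hluc⟩, htop⟩
      refine ⟨⟨fun x hx => ⟨Nat.one_le_iff_ne_zero.2 ?_, by have := hs x hx; omega⟩, hj, hnc⟩, htop⟩
      rintro rfl
      exact hluc ⟨hx, htop⟩
    · rintro ⟨⟨hs, hj, hnc⟩, htop⟩
      exact ⟨⟨⟨fun x hx => by have := hs x hx; omega, hj, hnc⟩,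
        fun h => by have := hs 0 h.1; omega⟩, htop⟩
  have h_notMem : (lucasSubsets n (j + 1)).filter (n - 1 ∉ ·) =
      (noConsecSubsets (Ico 0 (n - 1 + 1)) (j + 1)).filter (n - 1 ∉ ·) := by
    ext s
    simp only [lucasSubsets, mem_filter, mem_noConsecSubsets, mem_range, mem_Ico]
    constructor
    · rintro ⟨⟨⟨hs, hj, hnc⟩, -⟩, htop⟩
      exact ⟨⟨fun x hx => by have := hs x hx; omega, hj, hnc⟩, htop⟩
    · rintro ⟨⟨hs, hj, hnc⟩, htop⟩
      exact ⟨⟨⟨fun x hx => by have := hs x hx; omega, hj, hnc⟩, fun h => htop h.2⟩, htop⟩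
  rw [← card_filter_add_card_filter_not (p := (n - 1 ∈ ·)), h_mem, h_notMem,
    card_filter_mem_noConsecSubsets_Ico (by omega), filter_notMem_noConsecSubsets_Ico, add_comm,
    show n - 1 - 1 = n - 2 by omega]

lemma card_lucasSubsets_succ {n : ℕ} (hn : 2 ≤ n) (j : ℕ) :
    #(lucasSubsets n (j + 1)) = (n - (j + 1)).choose (j + 1) + (n - (j + 1) - 1).choose j := by
  rw [card_lucasSubsets_succ_eq_card_add_card hn, card_noConsecSubsets_Ico,
    card_noConsecSubsets_Ico, show n - 1 - 0 + 1 - (j + 1) = n - (j + 1) by omega]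
  rcases j with _ | j
  · simp
  · congr 2
    omega


lemma cast_card_lucasSubsets {R : Type*} [CommRing R] {n j : ℕ} (hn : 2 ≤ n) (hj : j ≤ n / 2) :
    (#(lucasSubsets n j) : R) = 2 * ((n - j).choose j : R) - ((n - j - 1).choose j : R) := by
  rcases j with _ | j
  · simp only [lucasSubsets, noConsecSubsets_zero, filter_singleton]
    norm_num
  · obtain ⟨m, hm⟩ : ∃ m, n - (j + 1) = m + 1 := ⟨n - (j + 1) - 1, by omega⟩
    rw [card_lucasSubsets_succ hn, hm, Nat.add_sub_cancel, Nat.choose_succ_succ']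
    push_cast
    ring

lemma card_lucasSubsets_eq_zero {n j : ℕ} (hn : 2 ≤ n) (hj : n / 2 < j) :
    #(lucasSubsets n j) = 0 := by
  obtain ⟨j, rfl⟩ := Nat.exists_eq_add_of_le' (by omega : 1 ≤ j)
  rw [card_lucasSubsets_succ hn, Nat.choose_eq_zero_of_lt (by omega),
    Nat.choose_eq_zero_of_lt (by omega)]

section LucasWords

variable {n : ℕ}

/-- The positions of the `1`s of a word, as natural numbers: on this side the counting recurses
on intervals of positions. -/
def natOnes (u : Fin n → Bool) : Finset ℕ := (ones u).map Fin.valEmbedding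

@[simp] lemma mem_natOnes {u : Fin n → Bool} {x : ℕ} :
    x ∈ natOnes u ↔ ∃ h : x < n, u ⟨x, h⟩ = true := by
  simp only [natOnes, mem_map, mem_ones, Fin.valEmbedding_apply]
  exact ⟨fun ⟨i, hi, hix⟩ => ⟨hix ▸ i.2, by simpa [← hix] using hi⟩, fun ⟨h, hx⟩ => ⟨_, hx, rfl⟩⟩

lemma card_natOnes (u : Fin n → Bool) : #(natOnes u) = #(ones u) := card_map _

lemma natOnes_indicator {s : Finset ℕ} (hs : ∀ x ∈ s, x < n) :
    natOnes (fun i : Fin n => decide ((i : ℕ) ∈ s)) = s := by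
  ext x
  simp only [mem_natOnes, decide_eq_true_eq]
  exact ⟨fun ⟨_, h⟩ => h, fun h => ⟨hs x h, h⟩⟩

lemma mem_lucasSet_iff {u : Fin n → Bool} :
    u ∈ lucasSet n ↔ NoConsec (natOnes u) ∧ ¬(0 ∈ natOnes u ∧ n - 1 ∈ natOnes u) := by
  simp only [lucasSet, fibSet, Set.mem_ofPred_eq, NoConsec, mem_natOnes]
  constructor
  · rintro ⟨hfib, hcyc⟩
    exact ⟨fun i ⟨hi, hui⟩ ⟨hi1, hui1⟩ => hfib ⟨i, hi⟩ ⟨i + 1, hi1⟩ rfl ⟨hui, hui1⟩,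
      fun ⟨⟨h0, hu0⟩, ⟨h1, hu1⟩⟩ => hcyc ⟨0, h0⟩ ⟨n - 1, h1⟩ rfl rfl ⟨hu0, hu1⟩⟩
  · rintro ⟨hnc, hcyc⟩
    refine ⟨fun ⟨i, hi⟩ ⟨j, hj⟩ hij h => ?_, fun ⟨i, hi⟩ ⟨j, hj⟩ hi0 hjn h => ?_⟩
    · simp only at hij
      subst hij
      exact hnc i ⟨hi, h.1⟩ ⟨hj, h.2⟩
    · simp only at hi0 hjn
      subst hi0 hjn
      exact hcyc ⟨⟨hi, h.1⟩, ⟨hj, h.2⟩⟩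

lemma isLowerSet_lucasSet : IsLowerSet (lucasSet n) := fun u v hvu hu => by
  have h : ∀ i, v i = true → u i = true := fun i => Bool.le_iff_imp.1 (hvu i)
  exact ⟨fun i j hij hv => hu.1 i j hij ⟨h i hv.1, h j hv.2⟩,
    fun i j hi hj hv => hu.2 i j hi hj ⟨h i hv.1, h j hv.2⟩⟩

lemma card_filter_card_ones_lucasSet [DecidablePred (· ∈ lucasSet n)] (j : ℕ) :
    #((lucasSet n).toFinset.filter fun u => #(ones u) = j) = #(lucasSubsets n j) := by
  refine card_nbij' natOnes (fun s i => decide ((i : ℕ) ∈ s)) (fun u hu => ?_) (fun s hs => ?_)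
    (fun u _ => funext fun i => by simp) (fun s hs => natOnes_indicator (mem_lucasSubsets.1 hs).1)
  · simp only [coe_filter, Set.mem_toFinset, Set.mem_ofPred_eq, mem_lucasSet_iff] at hu
    obtain ⟨⟨hnc, hcyc⟩, rfl⟩ := hu
    exact mem_lucasSubsets.2 ⟨fun x hx => (mem_natOnes.1 hx).1, card_natOnes u, hnc, hcyc⟩
  · obtain ⟨hsn, rfl, hnc, hcyc⟩ := mem_lucasSubsets.1 hs
    simp only [coe_filter, Set.mem_toFinset, Set.mem_ofPred_eq]
    rw [mem_lucasSet_iff, ← card_natOnes, natOnes_indicator hsn]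
    exact ⟨⟨hnc, hcyc⟩, rfl⟩

lemma sum_range_choose_mul_pow {R : Type*} [CommSemiring R] {w N : ℕ} (h : w < N) (x : R) :
    ∑ k ∈ range N, (w.choose k : R) * x ^ k = (1 + x) ^ w := by
  rw [add_comm, add_pow, ← sum_subset (range_subset_range.2 h) fun k _ hk => by
    rw [Nat.choose_eq_zero_of_lt (by simpa using hk), Nat.cast_zero, zero_mul]]
  exact sum_congr rfl fun k _ => by ring

lemma sum_pow_card_ones_lucasSet [DecidablePred (· ∈ lucasSet n)] (hn : 2 ≤ n) {R : Type*}
    [CommSemiring R] (y : R) :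
    ∑ u ∈ (lucasSet n).toFinset, y ^ #(ones u) =
      ∑ j ∈ range (n / 2 + 1), (#(lucasSubsets n j) : R) * y ^ j := by
  rw [← sum_fiberwise_of_maps_to (g := fun u => #(ones u)) (t := range (n / 2 + 1)) fun u hu => ?_]
  · refine sum_congr rfl fun j _ => ?_
    rw [sum_congr rfl fun u hu => by rw [(mem_filter.1 hu).2], sum_const, nsmul_eq_mul,
      card_filter_card_ones_lucasSet]
  · by_contra h
    have : 0 < #((lucasSet n).toFinset.filter fun v => #(ones v) = #(ones u)) :=
      card_pos.2 ⟨u, mem_filter.2 ⟨hu, rfl⟩⟩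
    rw [card_filter_card_ones_lucasSet, card_lucasSubsets_eq_zero hn (by simpa using h)] at this
    exact this.false

end LucasWords

theorem cubePolynomial_of_Lucas_cube (n : ℕ) (hn : 2 ≤ n) (x : ℝ) :
    ∑ k ∈ Finset.range (2 ^ n + 1),
      (cubeCount ((Qcube n).induce (lucasSet n)) k : ℝ) * x ^ k =
    ∑ k ∈ Finset.range (n / 2 + 1),
      (2 * ((n - k).choose k : ℝ) - ((n - k - 1).choose k : ℝ)) * (1 + x) ^ k := by
  classical
  have h_weight (u : Fin n → Bool) : #(ones u) < 2 ^ n + 1 :=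
    Nat.lt_succ_of_lt ((card_le_univ _).trans_lt (by simpa using Nat.lt_two_pow_self))
  calc ∑ k ∈ range (2 ^ n + 1), (cubeCount ((Qcube n).induce (lucasSet n)) k : ℝ) * x ^ k
      = ∑ u ∈ (lucasSet n).toFinset, (1 + x) ^ #(ones u) := by
        simp_rw [cubeCount_induce_of_isLowerSet isLowerSet_lucasSet, Nat.cast_sum, sum_mul]
        rw [sum_comm]
        exact sum_congr rfl fun u _ => sum_range_choose_mul_pow (h_weight u) x
    _ = ∑ j ∈ range (n / 2 + 1), (#(lucasSubsets n j) : ℝ) * (1 + x) ^ j :=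
        sum_pow_card_ones_lucasSet hn _
    _ = _ := sum_congr rfl fun j hj => by
        rw [cast_card_lucasSubsets hn (Nat.lt_succ_iff.1 (mem_range.1 hj))]
end
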